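/- Let n be a natural number and let L ⊆ {1,…,2n} be a set of size n such that for every j ∈ {1,…,2n}, the number of elements of L that are ≤ j is at least the number of elements of {1,…,2n} \ L that are ≤ j. Then there exists exactly one matching M ∈ ℳ_n with ne(M) = 0 whose set of left endpoints (the minima of its blocks) is exactly L. -/

import Mathlib

open Finset

/-- A path in `𝒫 n` is encoded by the `y`-coordinates of its east steps:
an integer sequence `a` with `-(i-1) ≤ a i ≤ i-1` (0-based: `-(i) ≤ a i ≤ i` for `i < n`),
normalized to be `0` outside the range. -/
def IsPath (n : ℕ) (a : ℕ → ℤ) : Prop :=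
  (∀ i < n, -(i : ℤ) ≤ a i ∧ a i ≤ (i : ℤ)) ∧ ∀ i, n ≤ i → a i = 0

/-- The set `𝒫 n` of partially directed paths in the symmetric wedge ending at `(n, -n)`. -/
def PPath (n : ℕ) := {a : ℕ → ℤ // IsPath n a}

/-- The number of north steps: `∑_{i=1}^{n-1} max (a_{i+1} - a_i) 0`. -/
def northSteps (n : ℕ) (a : ℕ → ℤ) : ℕ :=
  ∑ i ∈ Finset.range (n - 1), (a (i + 1) - a i).toNat

/-- A matching on `[2n]` as a fixed-point-free involution of `Fin (2n)`. -/
def IsMatching (n : ℕ) (f : Fin (2 * n) → Fin (2 * n)) : Prop :=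
  (∀ i, f (f i) = i) ∧ ∀ i, f i ≠ i

/-- The set `ℳ n` of matchings on `[2n]`. -/
def Matching (n : ℕ) := {f : Fin (2 * n) → Fin (2 * n) // IsMatching n f}

/-- The number of nestings of a matching: pairs of edges `(a,b)`, `(c,d)` with
`a < c < d < b`, recorded by the pair of left endpoints `(a, c)`. -/
def neM (n : ℕ) (f : Fin (2 * n) → Fin (2 * n)) : ℕ :=
  ((Finset.univ : Finset (Fin (2 * n) × Fin (2 * n))).filter
    (fun p => p.1 < p.2 ∧ p.2 < f p.2 ∧ f p.2 < f p.1)).card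

/-- The statistic `st`: for every pair of consecutive (by left endpoint) edges
`e_i = (a, b)`, `e_{i+1} = (c, d)` which are nested (`a < c < d < b`), count the
vertices `v` with `d ≤ v ≤ b` belonging to edges `e_k` with `k > i`
(i.e. edges whose left endpoint is `≥ c`), and sum over `i`. -/
def stM (n : ℕ) (f : Fin (2 * n) → Fin (2 * n)) : ℕ :=
  ∑ p ∈ (Finset.univ : Finset (Fin (2 * n) × Fin (2 * n))).filter
      (fun p => p.1 < f p.1 ∧ p.2 < f p.2 ∧ p.1 < p.2 ∧
        (∀ x, p.1 < x → x < p.2 → ¬ x < f x) ∧ f p.2 < f p.1),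
    (Finset.univ.filter
      (fun v : Fin (2 * n) => f p.2 ≤ v ∧ v ≤ f p.1 ∧ p.2 ≤ min v (f v))).card

/-! In a nesting-free matching the partner map is increasing on the left endpoints and sends them
to right endpoints, so it must join the `i`-th element of `L` to the `i`-th element of `Lᶜ`; this
gives uniqueness. Conversely, the prefix condition says precisely that the `i`-th element of `L`
precedes the `i`-th element of `Lᶜ`, so this pairing is a matching with left endpoints `L`, and it
has no nesting because it is increasing on `L`. -/

namespace Finset

variable {α : Type*} [LinearOrder α]

lemma card_filter_le_eq_card_filter_orderEmbOfFin_le (s : Finset α) {k : ℕ} (h : #s = k)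
    (j : α) : #{x ∈ s | x ≤ j} = #{a : Fin k | s.orderEmbOfFin h a ≤ j} := by
  conv_lhs => rw [← s.map_orderEmbOfFin_univ h, filter_map, card_map]
  rfl

lemma orderEmbOfFin_le_iff_lt_card_filter_le (s : Finset α) {k : ℕ} (h : #s = k) (i : Fin k)
    (j : α) : s.orderEmbOfFin h i ≤ j ↔ (i : ℕ) < #{x ∈ s | x ≤ j} := by
  rw [card_filter_le_eq_card_filter_orderEmbOfFin_le s h]
  constructor
  · intro hij
    refine Nat.lt_of_succ_le ((Fin.card_Iic i).symm.trans_le (card_le_card fun a ha => ?_))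
    simp only [mem_filter, mem_univ, true_and]
    exact ((s.orderEmbOfFin h).monotone (mem_Iic.mp ha)).trans hij
  · intro hi
    by_contra! hji
    refine (card_le_card fun a ha => ?_).trans (Fin.card_Iio i).le |>.not_gt hi
    simp only [mem_filter, mem_univ, true_and] at ha
    exact mem_Iio.mpr ((s.orderEmbOfFin h).lt_iff_lt.mp (ha.trans_lt hji))

lemma orderEmbOfFin_lt_of_card_filter_le {S T : Finset α} {k : ℕ} (hS : #S = k) (hT : #T = k)
    (hST : Disjoint S T) (hdom : ∀ j, #{x ∈ T | x ≤ j} ≤ #{x ∈ S | x ≤ j}) (i : Fin k) :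
    S.orderEmbOfFin hS i < T.orderEmbOfFin hT i := by
  have hT_le : (i : ℕ) < #{x ∈ T | x ≤ T.orderEmbOfFin hT i} :=
    (T.orderEmbOfFin_le_iff_lt_card_filter_le hT i _).mp le_rfl
  refine lt_of_le_of_ne ?_ fun heq => ?_
  · exact (S.orderEmbOfFin_le_iff_lt_card_filter_le hS i _).mpr (hT_le.trans_le (hdom _))
  · exact disjoint_left.mp hST (S.orderEmbOfFin_mem hS i) (heq ▸ T.orderEmbOfFin_mem hT i)

lemma lt_orderIsoOfFin_compl [Fintype α] {L : Finset α} {k : ℕ} (hL : #L = k) (hLc : #Lᶜ = k)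
    (hdom : ∀ j, #{x ∈ Lᶜ | x ≤ j} ≤ #{x ∈ L | x ≤ j}) (x : L) :
    (x : α) < (L.orderIsoOfFin hL).symm.trans (Lᶜ.orderIsoOfFin hLc) x := by
  obtain ⟨i, rfl⟩ := (L.orderIsoOfFin hL).surjective x
  simpa using orderEmbOfFin_lt_of_card_filter_le hL hLc disjoint_compl_right hdom i

end Finset

section Pairing

variable {α : Type*} [Fintype α] [DecidableEq α] {L : Finset α}

def pairAlong (e : L ≃ (Lᶜ : Finset α)) (x : α) : α :=
  if h : x ∈ L then e ⟨x, h⟩ else e.symm ⟨x, mem_compl.mpr h⟩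

variable (e : L ≃ (Lᶜ : Finset α))

lemma pairAlong_of_mem {x : α} (h : x ∈ L) : pairAlong e x = e ⟨x, h⟩ := dif_pos h

lemma pairAlong_of_notMem {x : α} (h : x ∉ L) :
    pairAlong e x = e.symm ⟨x, mem_compl.mpr h⟩ := dif_neg h

lemma pairAlong_mem_iff (x : α) : pairAlong e x ∈ L ↔ x ∉ L := by
  by_cases h : x ∈ L
  · simpa [pairAlong_of_mem e h, h] using mem_compl.mp (e ⟨x, h⟩).2
  · simp [pairAlong_of_notMem e h, h]

lemma pairAlong_pairAlong (x : α) : pairAlong e (pairAlong e x) = x := by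
  by_cases h : x ∈ L
  · rw [pairAlong_of_notMem e ((pairAlong_mem_iff e x).not_left.mpr h)]
    simp [pairAlong_of_mem e h]
  · rw [pairAlong_of_mem e ((pairAlong_mem_iff e x).mpr h)]
    simp [pairAlong_of_notMem e h]

lemma pairAlong_ne (x : α) : pairAlong e x ≠ x := fun hx =>
  by simpa [hx] using pairAlong_mem_iff e x

end Pairing

lemma lt_pairAlong_iff {α : Type*} [Fintype α] [LinearOrder α] {L : Finset α}
    (e : L ≃ (Lᶜ : Finset α)) (he : ∀ x : L, (x : α) < e x) (v : α) :
    v < pairAlong e v ↔ v ∈ L := by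
  by_cases hv : v ∈ L
  · simpa [pairAlong_of_mem e hv, hv] using he ⟨v, hv⟩
  · have hw : pairAlong e v ∈ L := (pairAlong_mem_iff e v).mpr hv
    have hlt := he ⟨_, hw⟩
    rw [← pairAlong_of_mem e hw, pairAlong_pairAlong] at hlt
    simp [hv, hlt.le]

section Matching

variable {n : ℕ} {L : Finset (Fin (2 * n))}

lemma card_compl_of_card_eq (hL : #L = n) : #Lᶜ = n := by
  rw [card_compl, Fintype.card_fin, hL]
  omega

lemma neM_eq_zero_iff (f : Fin (2 * n) → Fin (2 * n)) :
    neM n f = 0 ↔ ∀ a b, a < b → b < f b → f a ≤ f b := by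
  simp [neM]

lemma neM_pairAlong_eq_zero (e : L ≃o (Lᶜ : Finset (Fin (2 * n))))
    (he : ∀ x : L, (x : Fin (2 * n)) < e x) : neM n (pairAlong e.toEquiv) = 0 := by
  rw [neM_eq_zero_iff]
  intro a b hab hb
  have hbL : b ∈ L := (lt_pairAlong_iff e.toEquiv he b).mp hb
  by_cases haL : a ∈ L
  · rw [pairAlong_of_mem _ haL, pairAlong_of_mem _ hbL]
    exact e.monotone (Subtype.mk_le_mk.mpr hab.le)
  · have ha : ¬ a < pairAlong e.toEquiv a := (lt_pairAlong_iff e.toEquiv he a).not.mpr haL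
    exact (not_lt.mp ha).trans (hab.le.trans hb.le)

lemma exists_isMatching_neM_eq_zero (hL : #L = n)
    (hdom : ∀ j, #{x ∈ Lᶜ | x ≤ j} ≤ #{x ∈ L | x ≤ j}) :
    ∃ f, IsMatching n f ∧ neM n f = 0 ∧ ∀ v, v ∈ L ↔ v < f v := by
  set e := (L.orderIsoOfFin hL).symm.trans (Lᶜ.orderIsoOfFin (card_compl_of_card_eq hL))
  have he := lt_orderIsoOfFin_compl hL (card_compl_of_card_eq hL) hdom
  exact ⟨pairAlong e.toEquiv, ⟨pairAlong_pairAlong _, pairAlong_ne _⟩,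
    neM_pairAlong_eq_zero e he, fun v => (lt_pairAlong_iff e.toEquiv he v).symm⟩

namespace IsMatching

variable {f g : Fin (2 * n) → Fin (2 * n)}

lemma eq_of_eqOn_lt (hf : IsMatching n f) (hg : ∀ x, g (g x) = x)
    (hfg : ∀ x, x < f x → g x = f x) : g = f := by
  funext x
  by_cases hx : x < f x
  · exact hfg x hx
  · have hfx : f x < f (f x) := by
      rw [hf.1 x]
      exact lt_of_le_of_ne (not_lt.mp hx) (hf.2 x)
    have hgfx : g (f x) = x := by rw [hfg _ hfx, hf.1]
    calc g x = g (g (f x)) := by rw [hgfx]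
      _ = f x := hg _

lemma apply_orderEmbOfFin (hf : IsMatching n f) (hne : neM n f = 0)
    (hLf : ∀ v, v ∈ L ↔ v < f v) (hL : #L = n) (i : Fin n) :
    f (L.orderEmbOfFin hL i) = Lᶜ.orderEmbOfFin (card_compl_of_card_eq hL) i := by
  refine congrFun (orderEmbOfFin_unique (card_compl_of_card_eq hL)
    (f := fun i => f (L.orderEmbOfFin hL i)) (fun i => ?_) fun i j hij => ?_) i
  · have hi := (hLf _).mp (L.orderEmbOfFin_mem hL i)
    rw [mem_compl, hLf, hf.1]
    exact hi.asymm
  · have hij' := (L.orderEmbOfFin hL).strictMono hij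
    refine lt_of_le_of_ne ((neM_eq_zero_iff f).mp hne _ _ hij' ?_) fun h => hij'.ne ?_
    · exact (hLf _).mp (L.orderEmbOfFin_mem hL j)
    · exact Function.Involutive.injective hf.1 h

lemma eq_of_neM_eq_zero (hf : IsMatching n f) (hg : IsMatching n g) (hnf : neM n f = 0)
    (hng : neM n g = 0) (hLf : ∀ v, v ∈ L ↔ v < f v) (hLg : ∀ v, v ∈ L ↔ v < g v)
    (hL : #L = n) : g = f := by
  refine hf.eq_of_eqOn_lt hg.1 fun x hx => ?_
  obtain ⟨i, rfl⟩ : x ∈ Set.range (L.orderEmbOfFin hL) := by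
    simpa using (hLf x).mpr hx
  rw [hf.apply_orderEmbOfFin hnf hLf, hg.apply_orderEmbOfFin hng hLg]

end IsMatching

end Matching

/-- If `L ⊆ [2n]` has size `n` and dominates its complement in every prefix,
then there is exactly one nesting-free matching in `ℳ n` whose set of left
endpoints is `L`. -/
theorem statement8 (n : ℕ) (L : Finset (Fin (2 * n))) (hcard : L.card = n)
    (hdom : ∀ j : Fin (2 * n),
      ((Lᶜ).filter (fun x => x ≤ j)).card ≤ (L.filter (fun x => x ≤ j)).card) :
    ∃! M : Matching n,
      neM n M.1 = 0 ∧ ∀ v : Fin (2 * n), v ∈ L ↔ v < M.1 v := by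
  obtain ⟨f, hf, hnf, hLf⟩ := exists_isMatching_neM_eq_zero hcard hdom
  exact ⟨⟨f, hf⟩, ⟨hnf, hLf⟩, fun g ⟨hng, hLg⟩ =>
    Subtype.ext (hf.eq_of_neM_eq_zero g.2 hnf hng hLf hLg hcard)⟩
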